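/- arXiv:2112.10560 — 2 statements merged into one kernel-verified Lean document; each statement's English description precedes it below -/
import Mathlib

section
/- There exists a constant $K > 0$ such that for all $r \in (0,1/2)$ and all $x, y \in (0,1)$: $\int_0^1 |m_{r,u}(y) - y|\, du \le K r$ and $\int_0^1 |m_{r,u}(y) - y - (m_{r,u}(x) - x)|\, du \le K |x - y|\, r$. -/
noncomputable def median (a b c : ℝ) : ℝ := max (min a b) (min (max a b) c)

noncomputable def mru (r u y : ℝ) : ℝ := median ((y - r) / (1 - r)) (y / (1 - r)) u

/-!
Writing `a = (y - r) / (1 - r)` and `b = y / (1 - r)`, the map `u ↦ m_{r,u}(y)` clamps `u` to the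
interval `[a, b]` of length `r / (1 - r)`, which contains `y`; this gives the first bound.
Moving `y` to `x` translates that interval by `s = (y - x) / (1 - r)`, so that
`m_{r,u}(y) = m_{r,u-s}(x) + s`. For `x ≤ y` the difference in the second integrand is thus
`(F (u - s) - F u) + (s - (y - x))` with `F = m_{r,·}(x)` monotone, so its integral over `[0, 1]`
is at most `∫₀¹ (F u - F (u - s)) du + (y - x) r / (1 - r)`. The first integral telescopes into
the integrals of `F` over two intervals of length `s`, whose difference is at most
`s r / (1 - r)` because `F` takes values in `[a, b]`.
-/

open intervalIntegral MeasureTheory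

section Median

variable (a b c : ℝ)

theorem median_add (s : ℝ) : median (a + s) (b + s) (c + s) = median a b c + s := by
  simp only [median, ← min_add_add_right, ← max_add_add_right]

theorem monotone_median : Monotone (median a b) :=
  fun _ _ h => max_le_max le_rfl (min_le_min_left _ h)

theorem min_le_median : min a b ≤ median a b c := le_max_left _ _

theorem median_le_max : median a b c ≤ max a b :=
  max_le min_le_max (min_le_left _ _)

theorem continuous_median : Continuous (median a b) := by
  unfold median
  fun_prop

variable {a b} in
theorem abs_median_sub_le {y : ℝ} (hy₁ : min a b ≤ y) (hy₂ : y ≤ max a b) :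
    |median a b c - y| ≤ |a - b| := by
  have := max_sub_min_eq_abs' a b
  have := min_le_median a b c
  have := median_le_max a b c
  rw [abs_le]
  constructor <;> linarith

end Median

theorem Monotone.integral_sub_comp_sub_le {f : ℝ → ℝ} (hf : Monotone f) {a b : ℝ}
    (hfa : ∀ u, a ≤ f u) (hfb : ∀ u, f u ≤ b) {s : ℝ} (hs : 0 ≤ s) (c d : ℝ) :
    ∫ u in c..d, (f u - f (u - s)) ≤ s * (b - a) := by
  have hint : ∀ c d, IntervalIntegrable f volume c d := fun _ _ => hf.intervalIntegrable
  have hint_shift : IntervalIntegrable (fun u => f (u - s)) volume c d :=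
    (hf.comp fun _ _ h => sub_le_sub_right h s).intervalIntegrable
  have hupper : ∫ u in d - s..d, f u ≤ s * b := by
    calc ∫ u in d - s..d, f u ≤ ∫ _ in d - s..d, b :=
          integral_mono_on (by linarith) (hint _ _) intervalIntegrable_const fun u _ => hfb u
      _ = s * b := by simp
  have hlower : s * a ≤ ∫ u in c - s..c, f u := by
    calc s * a = ∫ _ in c - s..c, a := by simp
      _ ≤ ∫ u in c - s..c, f u :=
          integral_mono_on (by linarith) intervalIntegrable_const (hint _ _) fun u _ => hfa u
  rw [intervalIntegral.integral_sub (hint _ _) hint_shift, integral_comp_sub_right,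
    integral_interval_sub_interval_comm' (hint _ _) (hint _ _) (hint _ _)]
  linarith

theorem div_one_sub_le_two_mul {c r : ℝ} (hc : 0 ≤ c) (hr : r ≤ 1 / 2) :
    c / (1 - r) ≤ 2 * c := by
  rw [div_le_iff₀ (by linarith)]
  nlinarith

theorem mru_eq_add (r u x y : ℝ) :
    mru r u y = mru r (u - (y - x) / (1 - r)) x + (y - x) / (1 - r) := by
  rw [mru, mru, ← median_add]
  congr 1 <;> ring

theorem continuous_mru (r y : ℝ) : Continuous fun u => mru r u y :=
  continuous_median _ _

theorem monotone_mru (r y : ℝ) : Monotone fun u => mru r u y :=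
  monotone_median _ _

section Mru

variable {r : ℝ}

theorem abs_mru_bounds_sub (hr₀ : 0 ≤ r) (hr₁ : r < 1) (y : ℝ) :
    |(y - r) / (1 - r) - y / (1 - r)| = r / (1 - r) := by
  rw [div_sub_div_same, sub_sub_cancel_left, neg_div, abs_neg,
    abs_of_nonneg (div_nonneg hr₀ (by linarith))]

theorem integral_abs_mru_sub_le (hr₀ : 0 ≤ r) (hr₁ : r < 1) {y : ℝ} (hy₀ : 0 ≤ y)
    (hy₁ : y ≤ 1) :
    ∫ u in (0:ℝ)..1, |mru r u y - y| ≤ r / (1 - r) := by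
  have h1r : 0 < 1 - r := by linarith
  have hlow : (y - r) / (1 - r) ≤ y := by
    rw [div_le_iff₀ h1r]; nlinarith
  have hhigh : y ≤ y / (1 - r) := by
    rw [le_div_iff₀ h1r]; nlinarith
  calc ∫ u in (0:ℝ)..1, |mru r u y - y| ≤ ∫ _ in (0:ℝ)..1, r / (1 - r) := by
        refine integral_mono_on zero_le_one
          (((continuous_mru r y).sub continuous_const).abs.intervalIntegrable _ _)
          intervalIntegrable_const fun u _ => ?_
        rw [← abs_mru_bounds_sub hr₀ hr₁ y]
        exact abs_median_sub_le _ (min_le_of_left_le hlow) (le_max_of_le_right hhigh)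
    _ = r / (1 - r) := by simp

theorem integral_abs_mru_sub_sub_le_of_le (hr₀ : 0 ≤ r) (hr₁ : r < 1) {x y : ℝ}
    (hxy : x ≤ y) :
    ∫ u in (0:ℝ)..1, |mru r u y - y - (mru r u x - x)|
      ≤ (y - x) / (1 - r) * (r / (1 - r)) + (y - x) * (r / (1 - r)) := by
  set s := (y - x) / (1 - r)
  set F := fun u => mru r u x
  have h1r : 0 < 1 - r := by linarith
  have hs : 0 ≤ s := div_nonneg (by linarith) h1r.le
  have hexcess : s - (y - x) = (y - x) * (r / (1 - r)) := by
    simp only [s]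
    field_simp
    ring
  have hexcess_nonneg : 0 ≤ (y - x) * (r / (1 - r)) :=
    mul_nonneg (sub_nonneg.2 hxy) (div_nonneg hr₀ h1r.le)
  have hpoint : ∀ u,
      |mru r u y - y - (mru r u x - x)| ≤ F u - F (u - s) + (y - x) * (r / (1 - r)) := by
    intro u
    have hFmono : F (u - s) ≤ F u := monotone_mru r x (sub_le_self u hs)
    rw [mru_eq_add r u x y, ← hexcess]
    change |F (u - s) + s - y - (F u - x)| ≤ _
    rw [abs_le]
    constructor <;> linarith
  have hint : IntervalIntegrable (fun u => F u - F (u - s)) volume 0 1 :=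
    ((continuous_mru r x).sub ((continuous_mru r x).comp
      (continuous_sub_right s))).intervalIntegrable _ _
  calc ∫ u in (0:ℝ)..1, |mru r u y - y - (mru r u x - x)|
      ≤ ∫ u in (0:ℝ)..1, (F u - F (u - s) + (y - x) * (r / (1 - r))) :=
        integral_mono_on zero_le_one
          ((((continuous_mru r y).sub continuous_const).sub
            ((continuous_mru r x).sub continuous_const)).abs.intervalIntegrable _ _)
          (hint.add intervalIntegrable_const) fun u _ => hpoint u
    _ = (∫ u in (0:ℝ)..1, (F u - F (u - s))) + (y - x) * (r / (1 - r)) := by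
        rw [intervalIntegral.integral_add hint intervalIntegrable_const]
        simp
    _ ≤ s * (r / (1 - r)) + (y - x) * (r / (1 - r)) := by
        rw [← abs_mru_bounds_sub hr₀ hr₁ x, ← max_sub_min_eq_abs']
        gcongr
        exact (monotone_mru r x).integral_sub_comp_sub_le (fun _ => min_le_median _ _ _)
          (fun _ => median_le_max _ _ _) hs 0 1

theorem integral_abs_mru_sub_sub_le (hr₀ : 0 ≤ r) (hr : r ≤ 1 / 2) (x y : ℝ) :
    ∫ u in (0:ℝ)..1, |mru r u y - y - (mru r u x - x)| ≤ 6 * |x - y| * r := by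
  wlog hxy : x ≤ y generalizing x y
  · simp_rw [abs_sub_comm (mru r _ y - y), abs_sub_comm x y]
    exact this y x (le_of_not_ge hxy)
  have hyx : 0 ≤ y - x := sub_nonneg.2 hxy
  have hρ : r / (1 - r) ≤ 2 * r := div_one_sub_le_two_mul hr₀ hr
  calc ∫ u in (0:ℝ)..1, |mru r u y - y - (mru r u x - x)|
      ≤ (y - x) / (1 - r) * (r / (1 - r)) + (y - x) * (r / (1 - r)) :=
        integral_abs_mru_sub_sub_le_of_le hr₀ (by linarith) hxy
    _ ≤ (2 * (y - x)) * (2 * r) + (y - x) * (2 * r) := by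
        gcongr
        · exact div_nonneg hr₀ (by linarith)
        · exact div_one_sub_le_two_mul hyx hr
    _ = 6 * |x - y| * r := by
        rw [abs_sub_comm, abs_of_nonneg hyx]
        ring

end Mru

theorem stmt6 :
    ∃ K : ℝ, 0 < K ∧
      ∀ r ∈ Set.Ioo (0:ℝ) (1/2), ∀ x ∈ Set.Ioo (0:ℝ) 1, ∀ y ∈ Set.Ioo (0:ℝ) 1,
        (∫ u in (0:ℝ)..1, |mru r u y - y|) ≤ K * r ∧
        (∫ u in (0:ℝ)..1, |mru r u y - y - (mru r u x - x)|) ≤ K * |x - y| * r := by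
  refine ⟨6, by norm_num, fun r ⟨hr₀, hr⟩ x _ y ⟨hy₀, hy₁⟩ => ⟨?_, ?_⟩⟩
  · calc ∫ u in (0:ℝ)..1, |mru r u y - y| ≤ r / (1 - r) :=
          integral_abs_mru_sub_le hr₀.le (by linarith) hy₀.le hy₁.le
      _ ≤ 2 * r := div_one_sub_le_two_mul hr₀.le hr.le
      _ ≤ 6 * r := by linarith
  · exact integral_abs_mru_sub_sub_le hr₀.le hr.le x y
end

section
/- For every $\alpha \ge 1$ and all $x, y \in [0,1]$, $\int_0^1 |\mathrm{median}(y-1, y, (u-y)\alpha) - \mathrm{median}(y-1, y, (u-x)\alpha)|\, du \le 3|x-y|$. -/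
/-!
Clamped to `[y - 1, y]`, the map `u ↦ (u - y) α` becomes a monotone function `f` of oscillation at
most `1`, and both medians are values of `f`, at `u` and at `u + (y - x)`. For a monotone function
the integral of `|f (u + d) - f u|` telescopes to the difference of the integrals of `f` over two
intervals of length `|d|`, hence is at most `|d|` times the oscillation.
-/

open intervalIntegral

theorem median_of_le {a b : ℝ} (hab : a ≤ b) (c : ℝ) : median a b c = max a (min b c) := by
  simp [median, min_eq_left hab, max_eq_right hab]

namespace Monotone

variable {f : ℝ → ℝ} {m M : ℝ}

theorem integral_mem_Icc (hf : Monotone f) (hbd : ∀ u, f u ∈ Set.Icc m M) {a b : ℝ}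
    (hab : a ≤ b) : ∫ u in a..b, f u ∈ Set.Icc ((b - a) * m) ((b - a) * M) := by
  have hlow := integral_mono_on (μ := MeasureTheory.volume) hab intervalIntegrable_const
    hf.intervalIntegrable (fun u _ => (hbd u).1)
  have hupp := integral_mono_on (μ := MeasureTheory.volume) hab hf.intervalIntegrable
    intervalIntegrable_const (fun u _ => (hbd u).2)
  rw [integral_const, smul_eq_mul] at hlow hupp
  exact ⟨hlow, hupp⟩

theorem integral_abs_sub_comp_add_le_of_nonneg (hf : Monotone f) (hbd : ∀ u, f u ∈ Set.Icc m M)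
    (a b : ℝ) {d : ℝ} (hd : 0 ≤ d) :
    ∫ u in a..b, |f (u + d) - f u| ≤ d * (M - m) := by
  have hpt : ∀ u, |f (u + d) - f u| = f (u + d) - f u := fun u =>
    abs_of_nonneg (sub_nonneg.mpr (hf (by linarith)))
  have htele : ∫ u in a..b, |f (u + d) - f u| = (∫ u in b..b + d, f u) - ∫ u in a..a + d, f u := by
    have hshifted : Monotone fun u => f (u + d) := fun _ _ h => hf (by linarith)
    simp only [hpt]
    rw [integral_sub hshifted.intervalIntegrable hf.intervalIntegrable, integral_comp_add_right,
      integral_interval_sub_interval_comm' hf.intervalIntegrable hf.intervalIntegrable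
        hf.intervalIntegrable]
  have hend := hf.integral_mem_Icc hbd (le_add_of_nonneg_right hd : b ≤ b + d)
  have hstart := hf.integral_mem_Icc hbd (le_add_of_nonneg_right hd : a ≤ a + d)
  rw [htele]
  simp only [add_sub_cancel_left] at hend hstart
  linarith [hend.2, hstart.1]

theorem integral_abs_sub_comp_add_le (hf : Monotone f) (hbd : ∀ u, f u ∈ Set.Icc m M)
    (a b d : ℝ) : ∫ u in a..b, |f (u + d) - f u| ≤ |d| * (M - m) := by
  rcases le_total 0 d with hd | hd
  · rw [abs_of_nonneg hd]
    exact hf.integral_abs_sub_comp_add_le_of_nonneg hbd a b hd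
  · have hshift : ∫ u in a..b, |f (u + d) - f u| = ∫ v in a + d..b + d, |f (v + -d) - f v| := by
      rw [← integral_comp_add_right]
      simp only [add_neg_cancel_right, abs_sub_comm]
    rw [hshift, abs_of_nonpos hd]
    exact hf.integral_abs_sub_comp_add_le_of_nonneg hbd _ _ (neg_nonneg.mpr hd)

end Monotone

theorem stmt7_general (α x y : ℝ) (hα : 1 ≤ α) :
    (∫ u in (0:ℝ)..1,
      |median (y - 1) y ((u - y) * α) - median (y - 1) y ((u - x) * α)|) ≤ 3 * |x - y| := by
  set f : ℝ → ℝ := fun u => max (y - 1) (min y ((u - y) * α))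
  have hf : Monotone f := fun a b h =>
    max_le_max le_rfl (min_le_min le_rfl (by nlinarith))
  have hbd : ∀ u, f u ∈ Set.Icc (y - 1) y := fun u =>
    ⟨le_max_left _ _, max_le (by linarith) (min_le_left _ _)⟩
  have hshape : ∀ u, |median (y - 1) y ((u - y) * α) - median (y - 1) y ((u - x) * α)|
      = |f (u + (y - x)) - f u| := fun u => by
    rw [median_of_le (by linarith), median_of_le (by linarith), abs_sub_comm,
      show u - x = u + (y - x) - y by ring]
  simp only [hshape]
  calc (∫ u in (0:ℝ)..1, |f (u + (y - x)) - f u|) ≤ |y - x| * (y - (y - 1)) :=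
        hf.integral_abs_sub_comp_add_le hbd 0 1 (y - x)
    _ ≤ 3 * |x - y| := by rw [abs_sub_comm]; linarith [abs_nonneg (x - y)]

theorem stmt7 (α x y : ℝ) (hα : 1 ≤ α) (hx : x ∈ Set.Icc (0:ℝ) 1) (hy : y ∈ Set.Icc (0:ℝ) 1) :
    (∫ u in (0:ℝ)..1,
      |median (y - 1) y ((u - y) * α) - median (y - 1) y ((u - x) * α)|) ≤ 3 * |x - y| :=
  stmt7_general α x y hα
end
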